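/- arXiv:2211.01410 — 2 statements merged into one kernel-verified Lean document; each statement's English description precedes it below -/
import Mathlib

section
/- Let n be a positive integer with Tribonacci representation set S. If n is a positive record, i.e., out(n) − α·n > out(m) − α·m for every integer m with 1 ≤ m < n, then every index j ∈ S satisfies T(j+1) − α·T(j) > 0. -/
/-- The Tribonacci sequence: T(0)=0, T(1)=0, T(2)=1,
    T(n+3) = T(n+2) + T(n+1) + T(n). -/
def trib : ℕ → ℕ
  | 0 => 0
  | 1 => 0
  | 2 => 1
  | n + 3 => trib (n + 2) + trib (n + 1) + trib n

/-- A Tribonacci representation set: a finite set of naturals, all at least 3,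
    containing no three consecutive integers. -/
def IsTribRep (S : Finset ℕ) : Prop :=
  (∀ i ∈ S, 3 ≤ i) ∧ ∀ i : ℕ, ¬(i ∈ S ∧ i + 1 ∈ S ∧ i + 2 ∈ S)

/-! Deleting an index `j` from the representation of `n` gives the representation
of `m = n - T(j)`, and `out` drops by exactly `T(j+1)`, so the record inequality at `m` reads
`0 < T(j+1) - α T(j)`. If `j` is the only index, compare with `m = 1` instead, using `α < 2`. -/

lemma trib_add_three (k : ℕ) : trib (k + 3) = trib (k + 2) + trib (k + 1) + trib k := rfl

lemma trib_pos {k : ℕ} (hk : 2 ≤ k) : 0 < trib k := by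
  induction k using Nat.strong_induction_on with
  | _ k ih =>
    match k, hk with
    | 2, _ => decide
    | k + 3, _ =>
      have := ih (k + 2) (by omega) (by omega)
      rw [trib_add_three]; omega

lemma two_le_trib {k : ℕ} (hk : 4 ≤ k) : 2 ≤ trib k := by
  obtain ⟨k, rfl⟩ : ∃ i, k = i + 3 := ⟨k - 3, by omega⟩
  have := trib_pos (k := k + 2) (by omega)
  have := trib_pos (k := k + 1) (by omega)
  rw [trib_add_three]; omega

lemma IsTribRep.mono {S T : Finset ℕ} (hS : IsTribRep S) (hTS : T ⊆ S) : IsTribRep T :=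
  ⟨fun i hi => hS.1 i (hTS hi), fun i ⟨h₀, h₁, h₂⟩ => hS.2 i ⟨hTS h₀, hTS h₁, hTS h₂⟩⟩

lemma isTribRep_singleton {i : ℕ} (hi : 3 ≤ i) : IsTribRep {i} := by
  refine ⟨by simpa using hi, fun k ⟨h₀, h₁, _⟩ => ?_⟩
  simp only [Finset.mem_singleton] at h₀ h₁
  omega

lemma IsTribRep.sum_trib_eq_zero_iff {S : Finset ℕ} (hS : IsTribRep S) :
    ∑ i ∈ S, trib i = 0 ↔ S = ∅ := by
  rw [Finset.sum_eq_zero_iff, ← Finset.not_nonempty_iff_eq_empty]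
  exact ⟨fun h ⟨i, hi⟩ => (trib_pos (by linarith [hS.1 i hi])).ne' (h i hi),
    fun h i hi => absurd ⟨i, hi⟩ h⟩

lemma lt_two_of_pow_three_eq {α : ℝ} (hα : α ^ 3 = α ^ 2 + α + 1) : α < 2 := by
  by_contra! h
  nlinarith [sq_nonneg α, sq_nonneg (α - 1)]

theorem positive_record_indices_general (α : ℝ) (hα : α ^ 3 = α ^ 2 + α + 1)
    (n : ℕ) (S : Finset ℕ) (hS : IsTribRep S)
    (hsum : n = ∑ i ∈ S, trib i)
    (hrec : ∀ m : ℕ, 1 ≤ m → m < n →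
      ∀ Sm : Finset ℕ, IsTribRep Sm → m = ∑ i ∈ Sm, trib i →
        (↑(∑ i ∈ Sm, trib (i + 1)) : ℝ) - α * m <
          (↑(∑ i ∈ S, trib (i + 1)) : ℝ) - α * n) :
    ∀ j ∈ S, 0 < (trib (j + 1) : ℝ) - α * trib j := by
  intro j hj
  have hj3 : 3 ≤ j := hS.1 j hj
  have htj : 0 < trib j := trib_pos (by omega)
  have hn : n = trib j + ∑ i ∈ S.erase j, trib i := hsum ▸ (Finset.add_sum_erase S trib hj).symm
  have hout : ∑ i ∈ S, trib (i + 1) = trib (j + 1) + ∑ i ∈ S.erase j, trib (i + 1) :=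
    (Finset.add_sum_erase S (fun i => trib (i + 1)) hj).symm
  rcases Nat.eq_zero_or_pos (∑ i ∈ S.erase j, trib i) with hm | hm
  · have hSj : S = {j} := by
      rw [← Finset.insert_erase hj, ((hS.mono (S.erase_subset j)).sum_trib_eq_zero_iff).1 hm]; rfl
    have h2α := lt_two_of_pow_three_eq hα
    have h4 : (2 : ℝ) ≤ trib (j + 1) := by exact_mod_cast two_le_trib (k := j + 1) (by omega)
    rcases (show n = 1 ∨ 1 < n by omega) with hn1 | hn1
    · have htj1 : (trib j : ℝ) = 1 := by exact_mod_cast (hn1 ▸ hm ▸ hn).symm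
      rw [htj1]
      linarith
    · have h1 := hrec 1 le_rfl hn1 {3} (isTribRep_singleton le_rfl) rfl
      simp only [Finset.sum_singleton, hSj] at h1 hn
      rw [hn] at h1
      norm_num [trib] at h1
      linarith
  · have h := hrec _ hm (by omega) (S.erase j) (hS.mono (S.erase_subset j)) rfl
    rw [hout, hn] at h
    push_cast at h
    linarith

/-- If `n` is a positive record for `out(n) − α·n`, then every index `j` in the
    Tribonacci representation of `n` satisfies `T(j+1) − α·T(j) > 0`. -/
theorem positive_record_indices (α : ℝ) (hα : α ^ 3 = α ^ 2 + α + 1)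
    (n : ℕ) (hn : 0 < n) (S : Finset ℕ) (hS : IsTribRep S)
    (hsum : n = ∑ i ∈ S, trib i)
    (hrec : ∀ m : ℕ, 1 ≤ m → m < n →
      ∀ Sm : Finset ℕ, IsTribRep Sm → m = ∑ i ∈ Sm, trib i →
        (↑(∑ i ∈ Sm, trib (i + 1)) : ℝ) - α * m <
          (↑(∑ i ∈ S, trib (i + 1)) : ℝ) - α * n) :
    ∀ j ∈ S, 0 < (trib (j + 1) : ℝ) - α * trib j :=
  positive_record_indices_general α hα n S hS hsum hrec
end

section
/- Let c(r) denote the r-th smallest positive integer whose Tribonacci representation set contains 3 (these integers form the first column of the Trithoff array). Then the ratio c(r)/r converges to α/(α−1) = (α²+1)/2 as r tends to infinity. -/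
/-!
Every natural number has a unique Tribonacci representation `rep n`, and the numbers whose
representation avoids `3` are exactly the values of the injective shift
`σ m = ∑_{i ∈ rep m} T(i+1)` (`tribShift`). Since `σ m - α m = ∑_{i ∈ rep m} (T(i+1) - α T(i))`
and the defects `T(i+1) - α T(i)` decay like `α^(-i/2)`, `σ m - α m` is bounded. Hence
`N/α + O(1)` numbers below `N` avoid `3`, the first column has `(1 - 1/α) N + O(1)` elements
below `N`, and its `r`-th element is `r α/(α - 1) + O(1)`.
-/

open Finset

theorem trib_add_four (n : ℕ) : trib (n + 4) = trib (n + 3) + trib (n + 2) + trib (n + 1) := rfl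

theorem trib_le_trib_succ : ∀ n, trib n ≤ trib (n + 1)
  | 0 | 1 | 2 => by decide
  | n + 3 => by rw [trib_add_four]; omega

theorem trib_pos_s6 {n : ℕ} (hn : 2 ≤ n) : 0 < trib n := by
  induction n, hn using Nat.le_induction with
  | base => decide
  | succ n _ ih => exact ih.trans_le (trib_le_trib_succ n)

theorem lt_trib_add_three (n : ℕ) : n < trib (n + 3) := by
  induction n with
  | zero => decide
  | succ n ih =>
    have := trib_pos_s6 (n := n + 2) (by omega)
    rw [trib_add_four]
    omega

theorem subset_range_of_notMem {S : Finset ℕ} {k : ℕ} (h : S ⊆ range (k + 1)) (hk : k ∉ S) :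
    S ⊆ range k := by
  rwa [range_add_one, subset_insert_iff_of_notMem hk] at h

theorem erase_subset_range {S : Finset ℕ} {k : ℕ} (h : S ⊆ range (k + 1)) :
    S.erase k ⊆ range k := by
  rwa [range_add_one, subset_insert_iff] at h

namespace IsTribRep

variable {S T : Finset ℕ}

theorem mono_s6 (hT : IsTribRep T) (h : S ⊆ T) : IsTribRep S :=
  ⟨fun i hi => hT.1 i (h hi), fun i hi => hT.2 i ⟨h hi.1, h hi.2.1, h hi.2.2⟩⟩

theorem insert {a : ℕ} (hS : IsTribRep S) (ha : 3 ≤ a) (hSa : S ⊆ range a)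
    (hgap : ¬(a - 2 ∈ S ∧ a - 1 ∈ S)) : IsTribRep (insert a S) := by
  refine ⟨fun i hi => ?_, fun i ⟨hi, hi1, hi2⟩ => ?_⟩
  · rcases mem_insert.1 hi with rfl | hi
    exacts [ha, hS.1 i hi]
  · have mem_of_ne {j : ℕ} (hj : j ∈ Insert.insert a S) (hne : j ≠ a) : j ∈ S :=
      (mem_insert.1 hj).resolve_left hne
    by_cases htop : i + 2 = a
    · exact hgap ⟨by simpa [← htop] using mem_of_ne hi (by omega),
        by simpa [← htop] using mem_of_ne hi1 (by omega)⟩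
    · have := mem_range.1 (hSa (mem_of_ne hi2 htop))
      exact hS.2 i ⟨mem_of_ne hi (by omega), mem_of_ne hi1 (by omega), mem_of_ne hi2 htop⟩

theorem sum_lt_trib (hS : IsTribRep S) {k : ℕ} (hk : 2 ≤ k) (hSk : S ⊆ range k) :
    ∑ i ∈ S, trib i < trib k := by
  induction k using Nat.strong_induction_on generalizing S with
  | _ k ih =>
  rcases S.eq_empty_or_nonempty with rfl | ⟨i, hi⟩
  · simpa using trib_pos_s6 hk
  obtain ⟨j, rfl⟩ : ∃ j, k = j + 4 :=
    ⟨k - 4, by have := hS.1 i hi; have := mem_range.1 (hSk hi); omega⟩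
  rw [trib_add_four]
  by_cases h3 : j + 3 ∈ S
  · rw [← add_sum_erase S _ h3]
    set R := S.erase (j + 3)
    have hR : IsTribRep R := hS.mono_s6 (erase_subset _ _)
    have hRk : R ⊆ range (j + 3) := erase_subset_range hSk
    by_cases h2 : j + 2 ∈ R
    · have h1 : j + 1 ∉ R.erase (j + 2) := fun h1 =>
        hS.2 (j + 1) ⟨mem_of_mem_erase (mem_of_mem_erase h1), mem_of_mem_erase h2, h3⟩
      have : ∑ i ∈ R.erase (j + 2), trib i < trib (j + 1) :=
        ih (j + 1) (by omega) (hR.mono_s6 (erase_subset _ _)) (by have := hR.1 _ h2; omega)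
          (subset_range_of_notMem (erase_subset_range hRk) h1)
      rw [← add_sum_erase _ _ h2]
      omega
    · have := ih (j + 2) (by omega) hR (by omega) (subset_range_of_notMem hRk h2)
      omega
  · have := ih (j + 3) (by omega) hS (by omega) (subset_range_of_notMem hSk h3)
    omega

theorem sum_lt_sum_of_mem (hS : IsTribRep S) (hT : IsTribRep T) {k : ℕ} (hk : k ∈ S)
    (hTk : T ⊆ range k) : ∑ i ∈ T, trib i < ∑ i ∈ S, trib i :=
  (hT.sum_lt_trib (by have := hS.1 k hk; omega) hTk).trans_le
    (single_le_sum (fun _ _ => Nat.zero_le _) hk)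

theorem eq_of_sum_eq_of_subset_range (hS : IsTribRep S) (hT : IsTribRep T) {k : ℕ}
    (hSk : S ⊆ range k) (hTk : T ⊆ range k) (h : ∑ i ∈ S, trib i = ∑ i ∈ T, trib i) :
    S = T := by
  induction k generalizing S T with
  | zero => rw [subset_empty.1 hSk, subset_empty.1 hTk]
  | succ k ih =>
    by_cases hkS : k ∈ S <;> by_cases hkT : k ∈ T
    · rw [← insert_erase hkS, ← insert_erase hkT]
      refine congrArg _ (ih (hS.mono_s6 (erase_subset _ _)) (hT.mono_s6 (erase_subset _ _))
        (erase_subset_range hSk) (erase_subset_range hTk) ?_)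
      rw [← add_sum_erase S _ hkS, ← add_sum_erase T _ hkT] at h
      omega
    · exact absurd h (hS.sum_lt_sum_of_mem hT hkS (subset_range_of_notMem hTk hkT)).ne'
    · exact absurd h (hT.sum_lt_sum_of_mem hS hkT (subset_range_of_notMem hSk hkS)).ne
    · exact ih hS hT (subset_range_of_notMem hSk hkS) (subset_range_of_notMem hTk hkT) h

theorem eq_of_sum_eq (hS : IsTribRep S) (hT : IsTribRep T)
    (h : ∑ i ∈ S, trib i = ∑ i ∈ T, trib i) : S = T :=
  let ⟨_, hk⟩ := (S ∪ T).exists_nat_subset_range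
  hS.eq_of_sum_eq_of_subset_range hT (subset_union_left.trans hk)
    (subset_union_right.trans hk) h

end IsTribRep

theorem exists_isTribRep_subset_range_sum_eq {k n : ℕ} (hn : n < trib k) :
    ∃ S, IsTribRep S ∧ S ⊆ range k ∧ ∑ i ∈ S, trib i = n := by
  induction k using Nat.strong_induction_on generalizing n with
  | _ k ih =>
  rcases Nat.eq_zero_or_pos n with rfl | hn0
  · exact ⟨∅, ⟨by simp, by simp⟩, empty_subset _, sum_empty⟩
  have hk : 4 ≤ k := by
    by_contra! hk
    interval_cases k <;> simp [trib] at hn <;> omega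
  obtain ⟨j, rfl⟩ : ∃ j, k = j + 4 := ⟨k - 4, by omega⟩
  rw [trib_add_four] at hn
  by_cases h3 : n < trib (j + 3)
  · obtain ⟨S, hS, hSk, hsum⟩ := ih (j + 3) (by omega) h3
    exact ⟨S, hS, hSk.trans (range_subset_range.2 (by omega)), hsum⟩
  by_cases h2 : n - trib (j + 3) < trib (j + 2)
  · obtain ⟨S, hS, hSk, hsum⟩ := ih (j + 2) (by omega) h2
    have hSk' : S ⊆ range (j + 3) := hSk.trans (range_subset_range.2 (by omega))
    have h2S : j + 2 ∉ S := fun h => by simpa using hSk h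
    refine ⟨insert (j + 3) S, hS.insert (by omega) hSk' (by simp [h2S]),
      insert_subset (by simp) (hSk'.trans (range_subset_range.2 (by omega))), ?_⟩
    rw [sum_insert fun h => by simpa using hSk h]
    omega
  · have h1 : n - trib (j + 3) - trib (j + 2) < trib (j + 1) := by omega
    have hj : j ≠ 0 := by rintro rfl; simp [trib] at h1
    obtain ⟨S, hS, hSk, hsum⟩ := ih (j + 1) (by omega) h1
    have h1S : j + 1 ∉ S := fun h => by simpa using hSk h
    have h2S : j + 2 ∉ S := fun h => by simpa using hSk h
    have hS2k : insert (j + 2) S ⊆ range (j + 3) :=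
      insert_subset (by simp) (hSk.trans (range_subset_range.2 (by omega)))
    have hS2 : IsTribRep (insert (j + 2) S) :=
      hS.insert (by omega) (hSk.trans (range_subset_range.2 (by omega))) (by simp [h1S])
    refine ⟨insert (j + 3) (insert (j + 2) S), hS2.insert (by omega) hS2k (by simp [h1S]),
      insert_subset (by simp) (hS2k.trans (range_subset_range.2 (by omega))), ?_⟩
    rw [sum_insert fun h => by simpa using hS2k h, sum_insert h2S]
    omega

theorem exists_isTribRep_sum_eq (n : ℕ) : ∃ S, IsTribRep S ∧ ∑ i ∈ S, trib i = n :=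
  let ⟨S, hS, _, hsum⟩ := exists_isTribRep_subset_range_sum_eq (lt_trib_add_three n)
  ⟨S, hS, hsum⟩

noncomputable def tribRep (n : ℕ) : Finset ℕ := (exists_isTribRep_sum_eq n).choose

theorem isTribRep_tribRep (n : ℕ) : IsTribRep (tribRep n) :=
  (exists_isTribRep_sum_eq n).choose_spec.1

theorem sum_tribRep (n : ℕ) : ∑ i ∈ tribRep n, trib i = n :=
  (exists_isTribRep_sum_eq n).choose_spec.2

theorem tribRep_eq {S : Finset ℕ} {n : ℕ} (hS : IsTribRep S) (h : ∑ i ∈ S, trib i = n) :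
    tribRep n = S :=
  (isTribRep_tribRep n).eq_of_sum_eq hS (by rw [sum_tribRep, h])

theorem exists_isTribRep_and_sum_eq_iff {p : Finset ℕ → Prop} {n : ℕ} :
    (∃ S, IsTribRep S ∧ p S ∧ n = ∑ i ∈ S, trib i) ↔ p (tribRep n) := by
  refine ⟨fun ⟨S, hS, hp, hn⟩ => tribRep_eq hS hn.symm ▸ hp, fun hp => ?_⟩
  exact ⟨tribRep n, isTribRep_tribRep n, hp, (sum_tribRep n).symm⟩

theorem pos_of_three_mem_tribRep {n : ℕ} (h : 3 ∈ tribRep n) : 0 < n :=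
  calc 0 < trib 3 := by decide
    _ ≤ ∑ i ∈ tribRep n, trib i := single_le_sum (fun _ _ => Nat.zero_le _) h
    _ = n := sum_tribRep n

theorem IsTribRep.image_add_one {S : Finset ℕ} (hS : IsTribRep S) :
    IsTribRep (S.image (· + 1)) := by
  refine ⟨fun i hi => ?_, fun i ⟨hi, hi1, hi2⟩ => ?_⟩
  · obtain ⟨j, hj, rfl⟩ := mem_image.1 hi
    have := hS.1 j hj
    omega
  · obtain ⟨j, hj, rfl⟩ := mem_image.1 hi
    obtain ⟨j1, hj1, e1⟩ := mem_image.1 hi1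
    obtain ⟨j2, hj2, e2⟩ := mem_image.1 hi2
    obtain rfl : j1 = j + 1 := by omega
    obtain rfl : j2 = j + 2 := by omega
    exact hS.2 j ⟨hj, hj1, hj2⟩

theorem IsTribRep.exists_image_add_one_eq {S : Finset ℕ} (hS : IsTribRep S) (h3 : 3 ∉ S) :
    ∃ T, IsTribRep T ∧ T.image (· + 1) = S := by
  have h4 : ∀ i ∈ S, 4 ≤ i := fun i hi => by
    have := hS.1 i hi
    have : i ≠ 3 := by rintro rfl; exact h3 hi
    omega
  have hS' : S.image (· - 1 + 1) = S := by
    rw [image_congr (g := id) fun i hi => show i - 1 + 1 = i by have := h4 i hi; omega, image_id]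
  refine ⟨S.image (· - 1), ⟨fun i hi => ?_, fun i ⟨hi, hi1, hi2⟩ => ?_⟩, by rwa [image_image]⟩
  · obtain ⟨j, hj, rfl⟩ := mem_image.1 hi
    have := h4 j hj
    omega
  · obtain ⟨j, hj, rfl⟩ := mem_image.1 hi
    obtain ⟨j1, hj1, e1⟩ := mem_image.1 hi1
    obtain ⟨j2, hj2, e2⟩ := mem_image.1 hi2
    have := h4 j hj
    have := h4 j1 hj1
    have := h4 j2 hj2
    obtain rfl : j1 = j + 1 := by omega
    obtain rfl : j2 = j + 2 := by omega
    exact hS.2 j ⟨hj, hj1, hj2⟩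

noncomputable def tribShift (m : ℕ) : ℕ := ∑ i ∈ tribRep m, trib (i + 1)

theorem tribRep_tribShift (m : ℕ) : tribRep (tribShift m) = (tribRep m).image (· + 1) :=
  tribRep_eq (isTribRep_tribRep m).image_add_one (sum_image fun _ _ _ _ => Nat.succ_inj.1)

theorem tribShift_injective : Function.Injective tribShift := fun a b h => by
  have := congrArg tribRep h
  rw [tribRep_tribShift, tribRep_tribShift] at this
  rw [← sum_tribRep a, ← sum_tribRep b, image_injective (add_left_injective 1) this]

theorem le_tribShift (m : ℕ) : m ≤ tribShift m := by
  conv_lhs => rw [← sum_tribRep m]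
  exact sum_le_sum fun i _ => trib_le_trib_succ i

theorem three_notMem_tribRep_iff {n : ℕ} : 3 ∉ tribRep n ↔ ∃ m, tribShift m = n := by
  constructor
  · intro h
    obtain ⟨T, hT, hTS⟩ := (isTribRep_tribRep n).exists_image_add_one_eq h
    refine ⟨∑ i ∈ T, trib i, ?_⟩
    rw [tribShift, tribRep_eq hT rfl, ← sum_tribRep n, ← hTS,
      sum_image fun _ _ _ _ => Nat.succ_inj.1]
  · rintro ⟨m, rfl⟩ h
    rw [tribRep_tribShift] at h
    obtain ⟨i, hi, hi3⟩ := mem_image.1 h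
    have := (isTribRep_tribRep m).1 i hi
    omega

theorem one_lt_of_cube_eq {α : ℝ} (hα : α ^ 3 = α ^ 2 + α + 1) : 1 < α := by
  nlinarith [sq_nonneg (α - 1), sq_nonneg α, sq_nonneg (α + 1)]

-- Subtracting `α T(i)` removes the dominant root `α`: the defect satisfies the recurrence of the
-- remaining factor `x² + (α - 1) x + 1/α` of `x³ - x² - x - 1` (`tribDefect_add_two`).
noncomputable def tribDefect (α : ℝ) (i : ℕ) : ℝ := trib (i + 1) - α * trib i

-- That recurrence multiplies this quadratic form by exactly `1/α`; the form is positive definite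
-- because `α (α - 1)² = 2 - (α - 1)² < 4`.
noncomputable def tribDefectForm (α : ℝ) (i : ℕ) : ℝ :=
  α * tribDefect α (i + 1) ^ 2 + α * (α - 1) * tribDefect α (i + 1) * tribDefect α i +
    tribDefect α i ^ 2

section Defect

variable {α : ℝ} (hα : α ^ 3 = α ^ 2 + α + 1)
include hα

theorem tribDefect_add_two (i : ℕ) :
    α * tribDefect α (i + 2) = α * (1 - α) * tribDefect α (i + 1) - tribDefect α i := by
  simp only [tribDefect, show trib (i + 2 + 1) = trib (i + 2) + trib (i + 1) + trib i from rfl]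
  push_cast
  linear_combination (-(trib (i + 1) : ℝ)) * hα

theorem mul_tribDefectForm_succ (i : ℕ) :
    α * tribDefectForm α (i + 1) = tribDefectForm α i := by
  simp only [tribDefectForm, show i + 1 + 1 = i + 2 from rfl]
  linear_combination (α * tribDefect α (i + 2) - tribDefect α i) * tribDefect_add_two hα i

theorem pow_mul_tribDefectForm (i : ℕ) : α ^ i * tribDefectForm α i = α := by
  induction i with
  | zero => simp [tribDefectForm, tribDefect, trib]
  | succ i ih => rw [pow_succ, mul_assoc, mul_tribDefectForm_succ hα, ih]

theorem sq_tribDefect_le_two_mul_tribDefectForm (i : ℕ) :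
    tribDefect α i ^ 2 ≤ 2 * tribDefectForm α i := by
  have hα0 : 0 < α := zero_lt_one.trans (one_lt_of_cube_eq hα)
  have hsos : 2 * tribDefectForm α i - tribDefect α i ^ 2 =
      2 * α * (tribDefect α (i + 1) + (α - 1) / 2 * tribDefect α i) ^ 2 +
        ((α - 1) * tribDefect α i) ^ 2 / 2 := by
    simp only [tribDefectForm]
    linear_combination (-tribDefect α i ^ 2 / 2) * hα
  have : 0 ≤ 2 * tribDefectForm α i - tribDefect α i ^ 2 := by rw [hsos]; positivity
  linarith

theorem abs_tribDefect_le (i : ℕ) : |tribDefect α i| ≤ √(2 * α) * √α⁻¹ ^ i := by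
  have hα0 : 0 < α := zero_lt_one.trans (one_lt_of_cube_eq hα)
  refine abs_le_of_sq_le_sq ?_ (by positivity)
  have hV : tribDefectForm α i = α * α⁻¹ ^ i := by
    rw [inv_pow, eq_mul_inv_iff_mul_eq₀ (by positivity), mul_comm]
    exact pow_mul_tribDefectForm hα i
  rw [mul_pow, ← pow_mul, mul_comm i, pow_mul, Real.sq_sqrt (by positivity),
    Real.sq_sqrt (by positivity)]
  linarith [sq_tribDefect_le_two_mul_tribDefectForm hα i]

theorem summable_abs_tribDefect : Summable fun i => |tribDefect α i| := by
  have hα1 := one_lt_of_cube_eq hα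
  refine Summable.of_nonneg_of_le (fun _ => abs_nonneg _) (abs_tribDefect_le hα)
    ((summable_geometric_of_lt_one (Real.sqrt_nonneg _) ?_).mul_left _)
  rw [Real.sqrt_lt' one_pos, one_pow]
  exact inv_lt_one_of_one_lt₀ hα1

theorem abs_tribShift_sub_le (m : ℕ) :
    |(tribShift m : ℝ) - α * m| ≤ ∑' i, |tribDefect α i| := by
  have hsum : (tribShift m : ℝ) - α * m = ∑ i ∈ tribRep m, tribDefect α i := by
    simp only [tribDefect, sum_sub_distrib, ← mul_sum, ← Nat.cast_sum, sum_tribRep, tribShift]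
  rw [hsum]
  exact (abs_sum_le_sum_abs _ _).trans
    ((summable_abs_tribDefect hα).sum_le_tsum _ fun _ _ => abs_nonneg _)

end Defect

namespace Nat

variable {p : ℕ → Prop} [DecidablePred p]

theorem count_add_count_not (n : ℕ) : count p n + count (fun k => ¬p k) n = n := by
  simp only [count_eq_card_filter_range]
  exact (card_filter_add_card_filter_not _).trans (card_range n)

theorem count_eq_of_strictMono {c : ℕ → ℕ} (hc : StrictMono c)
    (hp : ∀ n, (∃ r, c r = n) ↔ p n) (r : ℕ) : count p (c r) = r := by
  have : {n ∈ range (c r) | p n} = (range r).image c := by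
    ext n
    simp only [mem_filter, mem_range, mem_image, ← hp]
    constructor
    · rintro ⟨hn, j, rfl⟩
      exact ⟨j, hc.lt_iff_lt.1 hn, rfl⟩
    · rintro ⟨j, hj, rfl⟩
      exact ⟨hc hj, j, rfl⟩
  rw [count_eq_card_filter_range, this, Finset.card_image_of_injective _ hc.injective, card_range]

theorem count_eq_count_lt_of_injective {g : ℕ → ℕ} (hg : Function.Injective g)
    (hle : ∀ m, m ≤ g m) (hp : ∀ n, p n ↔ ∃ m, g m = n) (n : ℕ) :
    count p n = count (fun m => g m < n) n := by
  have : {k ∈ range n | p k} = {m ∈ range n | g m < n}.image g := by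
    ext k
    simp only [mem_filter, mem_range, mem_image, hp]
    constructor
    · rintro ⟨hk, m, rfl⟩
      exact ⟨m, ⟨(hle m).trans_lt hk, hk⟩, rfl⟩
    · rintro ⟨m, ⟨-, hm⟩, rfl⟩
      exact ⟨hm, m, rfl⟩
  rw [count_eq_card_filter_range, count_eq_card_filter_range, this,
    Finset.card_image_of_injective _ hg]

theorem count_lt_add_one_of_forall_lt {x : ℝ} (hx : 0 ≤ x) (h : ∀ m, p m → (m : ℝ) < x)
    (n : ℕ) : (count p n : ℝ) < x + 1 := by
  have : count p n ≤ ⌈x⌉₊ := by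
    rw [count_eq_card_filter_range]
    refine (card_le_card fun m hm => ?_).trans (card_range _).le
    exact mem_range.2 (Nat.lt_ceil.2 (h m (mem_filter.1 hm).2))
  exact (Nat.cast_le.2 this).trans_lt (Nat.ceil_lt_add_one hx)

theorem le_count_of_forall_lt {x : ℝ} {n : ℕ} (h : ∀ m : ℕ, (m : ℝ) < x → m < n ∧ p m) :
    x ≤ count p n := by
  have : ⌈x⌉₊ ≤ count p n := by
    rw [count_eq_card_filter_range]
    refine (card_range _).symm.le.trans (card_le_card fun m hm => ?_)
    exact mem_filter.2 ((h m (Nat.lt_ceil.1 (mem_range.1 hm))).imp_left mem_range.2)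
  exact (Nat.le_ceil x).trans (Nat.cast_le.2 this)

end Nat

theorem abs_count_lt_sub_div_le {g : ℕ → ℕ} {α C : ℝ} (hα : 0 < α)
    (hg : ∀ m, |(g m : ℝ) - α * m| ≤ C) (hle : ∀ m, m ≤ g m) (N : ℕ) :
    |(Nat.count (fun m => g m < N) N : ℝ) - N / α| ≤ C / α + 1 := by
  have hC : 0 ≤ C := (abs_nonneg _).trans (hg 0)
  have upper := Nat.count_lt_add_one_of_forall_lt (p := fun m => g m < N)
    (x := (N + C) / α) (by positivity) (fun m hm => by
      have := (abs_le.1 (hg m)).1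
      have : (g m : ℝ) < N := by exact_mod_cast hm
      rw [lt_div_iff₀ hα]
      linarith) N
  have lower := Nat.le_count_of_forall_lt (p := fun m => g m < N) (n := N)
    (x := (N - C) / α) (fun m hm => by
      rw [lt_div_iff₀ hα] at hm
      have := (abs_le.1 (hg m)).2
      have hgN : g m < N := by exact_mod_cast (show (g m : ℝ) < N by linarith)
      exact ⟨(hle m).trans_lt hgN, hgN⟩)
  rw [add_div, sub_div] at *
  rw [abs_le]
  constructor <;> linarith

theorem exists_abs_count_three_mem_tribRep_sub_le {α : ℝ} (hα : α ^ 3 = α ^ 2 + α + 1) :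
    ∃ K, ∀ N : ℕ, |(Nat.count (fun n => 3 ∈ tribRep n) N : ℝ) - (1 - α⁻¹) * N| ≤ K := by
  have hα0 : 0 < α := zero_lt_one.trans (one_lt_of_cube_eq hα)
  refine ⟨(∑' i, |tribDefect α i|) / α + 1, fun N => ?_⟩
  have hsplit := Nat.count_add_count_not (p := fun n => 3 ∈ tribRep n) N
  rw [Nat.count_eq_count_lt_of_injective tribShift_injective le_tribShift
    (fun _ => three_notMem_tribRep_iff)] at hsplit
  have hbound := abs_count_lt_sub_div_le hα0 (abs_tribShift_sub_le hα) le_tribShift N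
  have hN : (N : ℝ) = Nat.count (fun n => 3 ∈ tribRep n) N +
      Nat.count (fun m => tribShift m < N) N := by exact_mod_cast hsplit.symm
  have : (Nat.count (fun n => 3 ∈ tribRep n) N : ℝ) - (1 - α⁻¹) * N =
      -((Nat.count (fun m => tribShift m < N) N : ℝ) - N / α) := by
    rw [hN]
    ring
  rwa [this, abs_neg]

open Filter Topology in
theorem tendsto_div_add_one_of_abs_sub_mul_le {c : ℕ → ℝ} {d K : ℝ} (hd : d ≠ 0)
    (h : ∀ r : ℕ, |r - d * c r| ≤ K) :
    Tendsto (fun r : ℕ => c r / (r + 1)) atTop (𝓝 d⁻¹) := by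
  have herr : Tendsto (fun r : ℕ => (r - d * c r) / (r + 1)) atTop (𝓝 0) := by
    refine squeeze_zero_norm (fun r => ?_)
      (by simpa using tendsto_one_div_add_atTop_nhds_zero_nat.const_mul K)
    rw [Real.norm_eq_abs, abs_div, abs_of_pos (by positivity : (0 : ℝ) < r + 1), div_eq_mul_inv]
    exact mul_le_mul_of_nonneg_right (h r) (by positivity)
  have := ((tendsto_natCast_div_add_atTop (1 : ℝ)).sub herr).const_mul d⁻¹
  rw [sub_zero, mul_one] at this
  refine this.congr fun r => ?_
  field_simp
  ring

/-- If `c` enumerates (in increasing order, starting at index 0) the positive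
    integers whose Tribonacci representation set contains 3 (the first column of
    the Trithoff array), then `c r / r` (1-indexed) converges to `α/(α−1)`. -/
theorem first_column_growth_rate (α : ℝ) (hα : α ^ 3 = α ^ 2 + α + 1)
    (c : ℕ → ℕ) (hmono : StrictMono c)
    (hrange : ∀ n : ℕ, (∃ r : ℕ, c r = n) ↔
      (0 < n ∧ ∃ S : Finset ℕ, IsTribRep S ∧ 3 ∈ S ∧ n = ∑ i ∈ S, trib i)) :
    Filter.Tendsto (fun r : ℕ => (c r : ℝ) / (r + 1)) Filter.atTop
      (nhds (α / (α - 1))) := by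
  have hα1 := one_lt_of_cube_eq hα
  have hc : ∀ n, (∃ r, c r = n) ↔ 3 ∈ tribRep n := fun n => by
    rw [hrange, exists_isTribRep_and_sum_eq_iff (p := (3 ∈ ·))]
    exact and_iff_right_of_imp pos_of_three_mem_tribRep
  obtain ⟨K, hK⟩ := exists_abs_count_three_mem_tribRep_sub_le hα
  have hlim := tendsto_div_add_one_of_abs_sub_mul_le (c := fun r => (c r : ℝ))
    (sub_ne_zero.2 (inv_lt_one_of_one_lt₀ hα1).ne') fun r => by
      simpa [Nat.count_eq_of_strictMono hmono hc] using hK (c r)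
  convert hlim using 2
  field_simp
end
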